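/- (Bayes risk identity) Let M, Γ_prior, Γ_noise be symmetric positive definite (with Γ_prior M-symmetric on (ℝⁿ, ⟨·,·⟩_M) and Γ_noise on ℝ^q), F : ℝⁿ → ℝ^q linear with M-adjoint F*, H_misfit = F* Γ_noise⁻¹ F, Γ_post = (H_misfit + Γ_prior⁻¹)⁻¹, and for data y define m_post^y = Γ_post(F* Γ_noise⁻¹ y + Γ_prior⁻¹ m₀). If m ~ N(m₀, Γ_prior) on (ℝⁿ, ⟨·,·⟩_M) and, given m, y ~ N(F m, Γ_noise), then E_{m}[ E_{y|m}[ ‖m_post^y − m‖²_M ] ] = tr(Γ_post). -/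

import Mathlib

/-!
Since `Γ_post (H_misfit + Γ_prior⁻¹) = 1`, the error of the posterior mean splits as
`m_post − m = Γ_post F* Γ_noise⁻¹ ε − Γ_post Γ_prior⁻¹ (m − m₀)` with `ε = y − F m`, a sum of
linear images `Q η − P ξ` of two independent standard Gaussian vectors. Its expected squared
`M`-norm is therefore `tr (M Q Qᵀ) + tr (M P Pᵀ)`. With `M`-self-adjointness of `Γ_prior` one finds
`Q Qᵀ = Γ_post H_misfit M⁻¹ Γ_postᵀ` and `P Pᵀ = Γ_post Γ_prior⁻¹ M⁻¹ Γ_postᵀ`, which add up to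
`M⁻¹ Γ_postᵀ`; hence the risk is `tr Γ_postᵀ = tr Γ_post`.
-/

open MeasureTheory ProbabilityTheory Matrix

lemma mulVec_dotProduct_mulVec_mulVec {m ι κ : Type*} [Fintype m] [Fintype ι] [Fintype κ]
    (A : Matrix m ι ℝ) (M : Matrix m m ℝ) (B : Matrix m κ ℝ) (x : ι → ℝ) (y : κ → ℝ) :
    (A *ᵥ x) ⬝ᵥ (M *ᵥ (B *ᵥ y)) = x ⬝ᵥ ((Aᵀ * M * B) *ᵥ y) := by
  rw [mulVec_mulVec, dotProduct_mulVec, dotProduct_mulVec, Matrix.mul_assoc, ← vecMul_vecMul x,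
    vecMul_transpose]

lemma sub_dotProduct_mulVec_sub {m ι : Type*} [Fintype m] [Fintype ι]
    (Q : Matrix m ι ℝ) (M : Matrix m m ℝ) (c : m → ℝ) (x : ι → ℝ) :
    (Q *ᵥ x - c) ⬝ᵥ (M *ᵥ (Q *ᵥ x - c)) =
      x ⬝ᵥ ((Qᵀ * M * Q) *ᵥ x) - (Qᵀ *ᵥ ((M + Mᵀ) *ᵥ c)) ⬝ᵥ x + c ⬝ᵥ (M *ᵥ c) := by
  have h1 : (Q *ᵥ x) ⬝ᵥ (M *ᵥ c) = (Qᵀ *ᵥ (M *ᵥ c)) ⬝ᵥ x := by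
    rw [dotProduct_comm, dotProduct_mulVec, mulVec_transpose]
  have h2 : c ⬝ᵥ (M *ᵥ (Q *ᵥ x)) = (Qᵀ *ᵥ (Mᵀ *ᵥ c)) ⬝ᵥ x := by
    rw [dotProduct_mulVec, dotProduct_mulVec, mulVec_transpose, mulVec_transpose]
  rw [mulVec_sub, sub_dotProduct, dotProduct_sub, dotProduct_sub, h1, h2,
    mulVec_dotProduct_mulVec_mulVec Q M Q x x]
  simp only [add_mulVec, mulVec_add, add_dotProduct]
  ring

lemma dotProduct_mulVec_self_eq_sum {ι : Type*} [Fintype ι] (C : Matrix ι ι ℝ) (x : ι → ℝ) :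
    x ⬝ᵥ (C *ᵥ x) = ∑ i, ∑ j, C i j * (x i * x j) := by
  simp only [dotProduct, mulVec, Finset.mul_sum]
  exact Finset.sum_congr rfl fun i _ => Finset.sum_congr rfl fun j _ => by ring

lemma integral_sq_gaussianReal_zero (v : NNReal) : ∫ x, x ^ 2 ∂gaussianReal 0 v = v := by
  rw [← variance_id_gaussianReal (μ := 0) (v := v),
    variance_of_integral_eq_zero aemeasurable_id integral_id_gaussianReal]
  rfl

section IsotropicProduct

variable {ι : Type*} [Fintype ι] {ν : Measure ℝ} [IsProbabilityMeasure ν]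

lemma memLp_pi_eval (h2 : MemLp id 2 ν) (i : ι) :
    MemLp (fun x : ι → ℝ => x i) 2 (Measure.pi fun _ => ν) :=
  h2.comp_measurePreserving (measurePreserving_eval _ i)

lemma integrable_pi_eval_mul_eval (h2 : MemLp id 2 ν) (i j : ι) :
    Integrable (fun x : ι → ℝ => x i * x j) (Measure.pi fun _ => ν) :=
  (memLp_pi_eval h2 i).integrable_mul (memLp_pi_eval h2 j)

lemma integral_pi_eval_mul_eval [DecidableEq ι] (hmean : ∫ t, t ∂ν = 0)
    (hvar : ∫ t, t ^ 2 ∂ν = 1) (i j : ι) :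
    ∫ x : ι → ℝ, x i * x j ∂(Measure.pi fun _ => ν) = (1 : Matrix ι ι ℝ) i j := by
  by_cases hij : i = j
  · subst hij
    simpa only [sq, one_apply_eq] using
      (integral_comp_eval (μ := fun _ => ν) (f := fun t : ℝ => t ^ 2) (by fun_prop)).trans hvar
  · have hindep := (iIndepFun_pi (μ := fun _ : ι => ν) (X := fun _ => id)
      fun _ => aemeasurable_id).indepFun hij
    have hmul := hindep.integral_mul_eq_mul_integral (measurable_pi_apply i).aestronglyMeasurable
      (measurable_pi_apply j).aestronglyMeasurable
    simp only [id, Pi.mul_def] at hmul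
    rw [one_apply_ne hij, hmul, integral_eval, hmean, zero_mul]

lemma integrable_pi_dotProduct (h2 : MemLp id 2 ν) (v : ι → ℝ) :
    Integrable (fun x : ι → ℝ => v ⬝ᵥ x) (Measure.pi fun _ => ν) :=
  integrable_finsetSum _ fun i _ => ((memLp_pi_eval h2 i).integrable one_le_two).const_mul (v i)

lemma integral_pi_dotProduct (h2 : MemLp id 2 ν) (hmean : ∫ t, t ∂ν = 0) (v : ι → ℝ) :
    ∫ x : ι → ℝ, v ⬝ᵥ x ∂(Measure.pi fun _ => ν) = 0 := by
  simp only [dotProduct]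
  rw [integral_finsetSum _ fun i _ =>
    ((memLp_pi_eval h2 i).integrable one_le_two).const_mul (v i)]
  simp [integral_const_mul, integral_eval, hmean]

lemma integrable_pi_dotProduct_mulVec (h2 : MemLp id 2 ν) (C : Matrix ι ι ℝ) :
    Integrable (fun x : ι → ℝ => x ⬝ᵥ (C *ᵥ x)) (Measure.pi fun _ => ν) := by
  simp only [dotProduct_mulVec_self_eq_sum]
  exact integrable_finsetSum _ fun i _ => integrable_finsetSum _ fun j _ =>
    (integrable_pi_eval_mul_eval h2 i j).const_mul _

lemma integral_pi_dotProduct_mulVec [DecidableEq ι] (h2 : MemLp id 2 ν)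
    (hmean : ∫ t, t ∂ν = 0) (hvar : ∫ t, t ^ 2 ∂ν = 1) (C : Matrix ι ι ℝ) :
    ∫ x : ι → ℝ, x ⬝ᵥ (C *ᵥ x) ∂(Measure.pi fun _ => ν) = C.trace := by
  simp only [dotProduct_mulVec_self_eq_sum]
  refine (integral_finsetSum _ fun i _ => integrable_finsetSum _ fun j _ =>
    (integrable_pi_eval_mul_eval h2 i j).const_mul _).trans (Finset.sum_congr rfl fun i _ => ?_)
  rw [integral_finsetSum _ fun j _ => (integrable_pi_eval_mul_eval h2 i j).const_mul _]
  simp [integral_const_mul, integral_pi_eval_mul_eval hmean hvar, one_apply]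

lemma integral_pi_quadForm_sub {m : Type*} [Fintype m] [DecidableEq ι] (h2 : MemLp id 2 ν)
    (hmean : ∫ t, t ∂ν = 0) (hvar : ∫ t, t ^ 2 ∂ν = 1)
    (Q : Matrix m ι ℝ) (M : Matrix m m ℝ) (c : m → ℝ) :
    ∫ x : ι → ℝ, (Q *ᵥ x - c) ⬝ᵥ (M *ᵥ (Q *ᵥ x - c)) ∂(Measure.pi fun _ => ν) =
      (Qᵀ * M * Q).trace + c ⬝ᵥ (M *ᵥ c) := by
  simp only [sub_dotProduct_mulVec_sub]
  have hquad := integrable_pi_dotProduct_mulVec h2 (ν := ν) (Qᵀ * M * Q)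
  have hlin := integrable_pi_dotProduct h2 (ν := ν) (Qᵀ *ᵥ ((M + Mᵀ) *ᵥ c))
  rw [integral_add (hquad.sub' hlin) (integrable_const _), integral_sub hquad hlin,
    integral_pi_dotProduct_mulVec h2 hmean hvar, integral_pi_dotProduct h2 hmean, integral_const]
  simp

lemma integral_integral_pi_quadForm_sub {m κ : Type*} [Fintype m] [Fintype κ] [DecidableEq ι]
    [DecidableEq κ] (h2 : MemLp id 2 ν) (hmean : ∫ t, t ∂ν = 0) (hvar : ∫ t, t ^ 2 ∂ν = 1)
    (Q : Matrix m ι ℝ) (P : Matrix m κ ℝ) (M : Matrix m m ℝ) :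
    ∫ ξ : κ → ℝ, ∫ η : ι → ℝ, (Q *ᵥ η - P *ᵥ ξ) ⬝ᵥ (M *ᵥ (Q *ᵥ η - P *ᵥ ξ))
        ∂(Measure.pi fun _ => ν) ∂(Measure.pi fun _ => ν) =
      (Qᵀ * M * Q).trace + (Pᵀ * M * P).trace := by
  simp only [integral_pi_quadForm_sub h2 hmean hvar, mulVec_dotProduct_mulVec_mulVec]
  rw [integral_add (integrable_const _) (integrable_pi_dotProduct_mulVec h2 _),
    integral_pi_dotProduct_mulVec h2 hmean hvar, integral_const]
  simp

end IsotropicProduct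

lemma trace_transpose_mul_mul_self {n k : Type*} [Fintype n] [Fintype k] (X : Matrix n k ℝ)
    (M : Matrix n n ℝ) : (Xᵀ * M * X).trace = (M * (X * Xᵀ)).trace := by
  rw [Matrix.mul_assoc, trace_mul_comm, Matrix.mul_assoc]

section BayesAlgebra

variable {n q : Type*} [Fintype n] [DecidableEq n] [Fintype q]

lemma cfc_sqrt_mul_self_of_posSemidef {A : Matrix n n ℝ} (hA : A.PosSemidef) :
    cfc Real.sqrt A * cfc Real.sqrt A = A := by
  rw [← cfc_mul Real.sqrt Real.sqrt A]
  conv_rhs => rw [← cfc_id' ℝ A hA.1]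
  refine cfc_congr fun x hx => ?_
  rw [hA.1.spectrum_real_eq_range_eigenvalues] at hx
  obtain ⟨i, rfl⟩ := hx
  exact Real.mul_self_sqrt (hA.eigenvalues_nonneg i)

lemma transpose_cfc (f : ℝ → ℝ) (A : Matrix n n ℝ) : (cfc f A)ᵀ = cfc f A := by
  rw [← conjTranspose_eq_transpose_of_trivial]
  exact cfc_predicate f A

lemma isUnit_det_of_dotProduct_mulVec_mulVec_pos {M S : Matrix n n ℝ}
    (hpos : ∀ x : n → ℝ, x ≠ 0 → 0 < x ⬝ᵥ (M *ᵥ (S *ᵥ x))) : IsUnit S.det :=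
  isUnit_iff_ne_zero.2 fun h0 => by
    obtain ⟨v, hv, hSv⟩ := exists_mulVec_eq_zero_iff.2 h0
    simpa [hSv] using hpos v hv

lemma posDef_mul_inv_mul_self {M S : Matrix n n ℝ} (hM : M.PosDef) (hS : IsUnit S.det)
    (hSM : M * S = Sᵀ * M) : (M * (S * S)⁻¹).PosDef := by
  have hSM' : M * S⁻¹ = S⁻¹ᵀ * M :=
    calc M * S⁻¹ = S⁻¹ᵀ * (Sᵀ * M) * S⁻¹ := by
          rw [← Matrix.mul_assoc, ← transpose_mul, mul_nonsing_inv _ hS, transpose_one,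
            Matrix.one_mul]
      _ = S⁻¹ᵀ * M := by
          rw [← hSM, ← Matrix.mul_assoc, mul_nonsing_inv_cancel_right _ _ hS]
  have hconj : M * (S * S)⁻¹ = (S⁻¹)ᴴ * M * S⁻¹ := by
    rw [Matrix.mul_inv_rev, ← Matrix.mul_assoc, hSM', conjTranspose_eq_transpose_of_trivial]
  rw [hconj]
  exact hM.conjTranspose_mul_mul_same
    (mulVec_injective_iff_isUnit.2 ((isUnit_iff_isUnit_det _).2 (isUnit_nonsing_inv_det_iff.2 hS)))

lemma isUnit_det_misfit_add [DecidableEq q] {M Λ : Matrix n n ℝ} {Γn : Matrix q q ℝ} (hM : M.PosDef)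
    (hΓn : Γn.PosDef) (hΛ : (M * Λ).PosDef) (F : Matrix q n ℝ) :
    IsUnit (M⁻¹ * Fᵀ * Γn⁻¹ * F + Λ).det := by
  have hMdet : IsUnit M.det := isUnit_iff_ne_zero.2 hM.det_pos.ne'
  have hpos : (M * (M⁻¹ * Fᵀ * Γn⁻¹ * F + Λ)).PosDef := by
    rw [Matrix.mul_add, Matrix.mul_assoc, Matrix.mul_assoc, mul_nonsing_inv_cancel_left _ _ hMdet,
      ← Matrix.mul_assoc, ← conjTranspose_eq_transpose_of_trivial]
    exact PosDef.posSemidef_add (hΓn.inv.posSemidef.conjTranspose_mul_mul_same F) hΛ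
  have := hpos.det_pos.ne'
  rw [det_mul] at this
  exact isUnit_iff_ne_zero.2 (right_ne_zero_of_mul this)

lemma posterior_mean_sub {G Λ : Matrix n n ℝ} {Fs : Matrix n q ℝ} {R : Matrix q q ℝ}
    {F : Matrix q n ℝ} (hG : G * (Fs * R * F + Λ) = 1) (m₀ m : n → ℝ) (ε : q → ℝ) :
    G *ᵥ (Fs *ᵥ (R *ᵥ (F *ᵥ m + ε)) + Λ *ᵥ m₀) - m = (G * Fs * R) *ᵥ ε - (G * Λ) *ᵥ (m - m₀) := by
  have hm : m = G *ᵥ ((Fs * R * F + Λ) *ᵥ m) := by rw [mulVec_mulVec, hG, one_mulVec]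
  conv_lhs => arg 2; rw [hm]
  simp only [← mulVec_mulVec, mulVec_add, mulVec_sub, add_mulVec]
  abel

lemma mul_inv_mul_transpose_self {M S W : Matrix n n ℝ} (hMdet : IsUnit M.det)
    (hW : Wᵀ * W = M) (hSM : M * S = Sᵀ * M) :
    S * W⁻¹ * (S * W⁻¹)ᵀ = S * S * M⁻¹ := by
  have hSt : Sᵀ = M * S * M⁻¹ := by rw [hSM, mul_nonsing_inv_cancel_right _ _ hMdet]
  rw [transpose_mul, transpose_nonsing_inv, Matrix.mul_assoc, ← Matrix.mul_assoc W⁻¹,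
    ← Matrix.mul_inv_rev, hW, hSt, Matrix.mul_assoc M, ← Matrix.mul_assoc M⁻¹,
    nonsing_inv_mul _ hMdet, Matrix.one_mul, Matrix.mul_assoc]

lemma trace_posterior_error [DecidableEq q] {M Γp G A : Matrix n n ℝ} {Γn B : Matrix q q ℝ}
    {F : Matrix q n ℝ} (hMT : Mᵀ = M) (hMdet : IsUnit M.det) (hΓnT : Γnᵀ = Γn)
    (hΓndet : IsUnit Γn.det) (hΓpdet : IsUnit Γp.det)
    (hG : G * (M⁻¹ * Fᵀ * Γn⁻¹ * F + Γp⁻¹) = 1) (hA : A * Aᵀ = Γp * M⁻¹) (hB : B * Bᵀ = Γn) :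
    ((G * (M⁻¹ * Fᵀ) * Γn⁻¹ * B)ᵀ * M * (G * (M⁻¹ * Fᵀ) * Γn⁻¹ * B)).trace +
      ((G * Γp⁻¹ * A)ᵀ * M * (G * Γp⁻¹ * A)).trace = G.trace := by
  have hMiT : M⁻¹ᵀ = M⁻¹ := by rw [transpose_nonsing_inv, hMT]
  have hΓniT : Γn⁻¹ᵀ = Γn⁻¹ := by rw [transpose_nonsing_inv, hΓnT]
  have hΓpM : M⁻¹ * Γpᵀ = Γp * M⁻¹ := by
    rw [← hMiT, ← transpose_mul, hMiT, ← hA, transpose_mul, transpose_transpose]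
  have hΓpiM : M⁻¹ * Γp⁻¹ᵀ = Γp⁻¹ * M⁻¹ :=
    calc M⁻¹ * Γp⁻¹ᵀ = Γp⁻¹ * (Γp * M⁻¹) * Γp⁻¹ᵀ := by
          rw [nonsing_inv_mul_cancel_left _ _ hΓpdet]
      _ = Γp⁻¹ * M⁻¹ := by
          rw [← hΓpM, Matrix.mul_assoc, Matrix.mul_assoc, ← transpose_mul,
            nonsing_inv_mul _ hΓpdet, transpose_one, Matrix.mul_one]
  have hQ : G * (M⁻¹ * Fᵀ) * Γn⁻¹ * B * (G * (M⁻¹ * Fᵀ) * Γn⁻¹ * B)ᵀ =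
      G * (M⁻¹ * Fᵀ * Γn⁻¹ * F) * M⁻¹ * Gᵀ :=
    calc _ = G * M⁻¹ * Fᵀ * Γn⁻¹ * (B * Bᵀ) * Γn⁻¹ * F * M⁻¹ * Gᵀ := by
          simp only [transpose_mul, transpose_transpose, hMiT, hΓniT, Matrix.mul_assoc]
      _ = _ := by
          rw [hB, mul_nonsing_inv_cancel_right _ _ hΓndet]
          simp only [Matrix.mul_assoc]
  have hP : G * Γp⁻¹ * A * (G * Γp⁻¹ * A)ᵀ = G * Γp⁻¹ * M⁻¹ * Gᵀ :=
    calc _ = G * Γp⁻¹ * (A * Aᵀ) * Γp⁻¹ᵀ * Gᵀ := by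
          simp only [transpose_mul, Matrix.mul_assoc]
      _ = _ := by
          rw [hA, ← Matrix.mul_assoc, nonsing_inv_mul_cancel_right _ _ hΓpdet, Matrix.mul_assoc G,
            hΓpiM, ← Matrix.mul_assoc G]
  rw [trace_transpose_mul_mul_self, trace_transpose_mul_mul_self, ← trace_add, ← Matrix.mul_add,
    hQ, hP, ← Matrix.add_mul, ← Matrix.add_mul, ← Matrix.mul_add, hG, Matrix.one_mul,
    mul_nonsing_inv_cancel_left _ _ hMdet, trace_transpose]

end BayesAlgebra

/-- Bayes risk identity: with `m ~ N(m₀, Γ_prior)` (in the `M`-inner product, realized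
via the `M`-symmetric square root `S` of `Γ_prior`) and `y | m ~ N(F m, Γ_noise)`,
the expected squared `M`-norm error of the posterior mean equals `tr(Γ_post)`. -/
theorem stmt13 (n q : ℕ) (M Γp S : Matrix (Fin n) (Fin n) ℝ) (hM : M.PosDef)
    (hS : S * S = Γp) (hSM : M * S = Sᵀ * M)
    (hSpos : ∀ x : Fin n → ℝ, x ≠ 0 → 0 < x ⬝ᵥ (M *ᵥ (S *ᵥ x)))
    (Γn : Matrix (Fin q) (Fin q) ℝ) (hΓn : Γn.PosDef)
    (F : Matrix (Fin q) (Fin n) ℝ) (m0 : Fin n → ℝ) :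
    let Fstar := M⁻¹ * Fᵀ
    let Hm := Fstar * Γn⁻¹ * F
    let Γpost := (Hm + Γp⁻¹)⁻¹
    let mpost := fun y : Fin q → ℝ =>
      Γpost *ᵥ (Fstar *ᵥ (Γn⁻¹ *ᵥ y) + Γp⁻¹ *ᵥ m0)
    let γn := Measure.pi fun _ : Fin n => gaussianReal 0 1
    let γq := Measure.pi fun _ : Fin q => gaussianReal 0 1
    let mm := fun ξ : Fin n → ℝ => m0 + (S * ((((hM.1.eigenvectorUnitary : Matrix _ _ ℝ) * diagonal ((↑) ∘ Real.sqrt ∘ hM.1.eigenvalues) * (star hM.1.eigenvectorUnitary : Matrix _ _ ℝ))))⁻¹) *ᵥ ξ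
    (∫ ξ, (∫ η,
        (fun e : Fin n → ℝ => e ⬝ᵥ (M *ᵥ e))
          (mpost (F *ᵥ mm ξ + (((hΓn.1.eigenvectorUnitary : Matrix _ _ ℝ) * diagonal ((↑) ∘ Real.sqrt ∘ hΓn.1.eigenvalues) * (star hΓn.1.eigenvectorUnitary : Matrix _ _ ℝ))) *ᵥ η) - mm ξ) ∂γq) ∂γn)
      = Γpost.trace := by
  intro Fstar Hm Γpost mpost γn γq mm
  set W : Matrix (Fin n) (Fin n) ℝ := (hM.1.eigenvectorUnitary : Matrix _ _ ℝ) *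
    diagonal ((↑) ∘ Real.sqrt ∘ hM.1.eigenvalues) * (star hM.1.eigenvectorUnitary : Matrix _ _ ℝ)
  set B : Matrix (Fin q) (Fin q) ℝ := (hΓn.1.eigenvectorUnitary : Matrix _ _ ℝ) *
    diagonal ((↑) ∘ Real.sqrt ∘ hΓn.1.eigenvalues) * (star hΓn.1.eigenvectorUnitary : Matrix _ _ ℝ)
  have hW : Wᵀ * W = M := by
    rw [show W = cfc Real.sqrt M by rw [hM.1.cfc_eq]; rfl, transpose_cfc,
      cfc_sqrt_mul_self_of_posSemidef hM.posSemidef]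
  have hB : B * Bᵀ = Γn := by
    rw [show B = cfc Real.sqrt Γn by rw [hΓn.1.cfc_eq]; rfl, transpose_cfc,
      cfc_sqrt_mul_self_of_posSemidef hΓn.posSemidef]
  have hMdet : IsUnit M.det := isUnit_iff_ne_zero.2 hM.det_pos.ne'
  have hSdet : IsUnit S.det := isUnit_det_of_dotProduct_mulVec_mulVec_pos hSpos
  have hΓpdet : IsUnit Γp.det := by rw [← hS, det_mul]; exact hSdet.mul hSdet
  have hpost : Γpost * (Hm + Γp⁻¹) = 1 := nonsing_inv_mul _
    (isUnit_det_misfit_add hM hΓn (hS ▸ posDef_mul_inv_mul_self hM hSdet hSM) F)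
  have herr : ∀ ξ η, mpost (F *ᵥ mm ξ + B *ᵥ η) - mm ξ =
      (Γpost * Fstar * Γn⁻¹ * B) *ᵥ η - (Γpost * Γp⁻¹ * (S * W⁻¹)) *ᵥ ξ := fun ξ η => by
    have hmm : mm ξ = m0 + (S * W⁻¹) *ᵥ ξ := rfl
    rw [posterior_mean_sub hpost, hmm, add_sub_cancel_left, mulVec_mulVec, mulVec_mulVec]
  simp only [herr]
  rw [integral_integral_pi_quadForm_sub (memLp_id_gaussianReal 2) integral_id_gaussianReal
    (by exact_mod_cast integral_sq_gaussianReal_zero 1)]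
  -- `S M^(-1/2) ξ` has Euclidean covariance `Γp M⁻¹`, i.e. covariance `Γp` for the `M`-inner
  -- product.
  refine trace_posterior_error hM.1 hMdet hΓn.1 (isUnit_iff_ne_zero.2 hΓn.det_pos.ne') hΓpdet
    hpost ?_ hB
  rw [mul_inv_mul_transpose_self hMdet hW hSM, hS]
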